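/- Let R be an affine root system (n = 1) of rank l and let Π be a base of R. Then R ∖ 2R = W_Π·Π := {w(α) : w ∈ W_Π, α ∈ Π}, and W_R = W_Π. -/

import Mathlib

/- ## Preliminaries: extended affine root systems (Saito) -/

noncomputable section

open Set

/-- The reflection `s_v : z ↦ z - (v^∨, z) v = z - (2 (v,z)/(v,v)) v` associated to a
bilinear form `B` and a vector `v`.  (When `B v v = 0` this is the identity, by the
`division by zero = 0` convention; reflections are only ever used at non-isotropic `v`.) -/
def srefl {V : Type*} [AddCommGroup V] [Module ℝ V]
    (B : LinearMap.BilinForm ℝ V) (v : V) : Module.End ℝ V :=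
  LinearMap.id - (((2 * (B v v)⁻¹) • (B v)).smulRight v)

/-- The Weyl group `W_S` generated by the reflections in the elements of `S`
(realized as the multiplicative closure; each generator is an involution, so this
agrees with the generated group). -/
def weyl {V : Type*} [AddCommGroup V] [Module ℝ V]
    (B : LinearMap.BilinForm ℝ V) (S : Set V) : Submonoid (Module.End ℝ V) :=
  Submonoid.closure (srefl B '' S)

/-- The orbit `W_S · α`. -/
def worbit {V : Type*} [AddCommGroup V] [Module ℝ V]
    (B : LinearMap.BilinForm ℝ V) (S : Set V) (α : V) : Set V :=
  {v | ∃ w ∈ weyl B S, w α = v}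

/-- `V⁰`, the set of isotropic vectors. -/
def nullSet {V : Type*} [AddCommGroup V] [Module ℝ V]
    (B : LinearMap.BilinForm ℝ V) : Set V := {v | B v v = 0}

/-- `ℤR`, the subgroup of `V` generated by `R`. -/
def zspan {V : Type*} [AddCommGroup V] (R : Set V) : AddSubgroup V :=
  AddSubgroup.closure R

/-- `ℤ≥0 Π`, the set of nonnegative-integer linear combinations of elements of `Π`. -/
def nnspan {V : Type*} [AddCommMonoid V] (P : Set V) : Set V :=
  (AddSubmonoid.closure P : Set V)

/-- `(R, V)` is an `n`-extended affine root system of rank `l` (K. Saito). -/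
structure IsEARS {V : Type*} [AddCommGroup V] [Module ℝ V]
    (B : LinearMap.BilinForm ℝ V) (R : Set V) (l n : ℕ) : Prop where
  rank_pos : 1 ≤ l
  findim : FiniteDimensional ℝ V
  symm : ∀ u v, B u v = B v u
  posSemidef : ∀ v, 0 ≤ B v v
  dim_eq : Module.finrank ℝ V = l + n
  null_eq : nullSet B = (LinearMap.ker B : Set V)
  dim_null : Module.finrank ℝ (LinearMap.ker B) = n
  /-- (AX1), first half -/
  root_nonisotropic : ∀ α ∈ R, B α α ≠ 0
  /-- (AX1), second half -/
  span_eq_top : Submodule.span ℝ R = ⊤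
  /-- (AX2) -/
  free : Module.Free ℤ (zspan R)
  /-- (AX2) -/
  rank_eq : Module.finrank ℤ (zspan R) = l + n
  /-- (AX3): `(α^∨, β) ∈ ℤ` -/
  integral : ∀ α ∈ R, ∀ β ∈ R, ∃ m : ℤ, 2 * B α β = (m : ℝ) * B α α
  /-- (AX4) -/
  reflect : ∀ α ∈ R, srefl B α '' R = R
  /-- (AX5) -/
  connected : ∀ S' ⊆ R, S'.Nonempty → S' ≠ R → ∃ x ∈ S', ∃ y ∈ R \ S', B x y ≠ 0

/-- `R` is reduced, i.e. `R ∩ 2R = ∅`. -/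
def IsReducedRS {V : Type*} [AddCommGroup V] [Module ℝ V] (R : Set V) : Prop :=
  ∀ α ∈ R, (2 : ℤ) • α ∉ R

/-- `Π₀` is a base (with `m` elements) of the root system `R₀`:
`Π₀ ⊆ R₀`, `Π₀` consists of `m` linearly independent elements, and
`R₀ = (R₀ ∩ ℤ≥0 Π₀) ∪ (R₀ ∩ ℤ≤0 Π₀)`. -/
def IsBaseSet {M : Type*} [AddCommGroup M] [Module ℝ M] (R₀ P₀ : Set M) (m : ℕ) : Prop :=
  P₀ ⊆ R₀ ∧ P₀.Finite ∧ P₀.ncard = m ∧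
  LinearIndependent ℝ ((↑) : P₀ → M) ∧
  R₀ = (R₀ ∩ nnspan P₀) ∪ (R₀ ∩ (-(nnspan P₀)))

/-- The bilinear form induced on a quotient `V ⧸ W` by a form vanishing on `W`. -/
def quotForm {V : Type*} [AddCommGroup V] [Module ℝ V]
    (W : Submodule ℝ V) (B : LinearMap.BilinForm ℝ V)
    (h1 : ∀ w ∈ W, B w = 0) (h2 : ∀ v : V, ∀ w ∈ W, B v w = 0) :
    LinearMap.BilinForm ℝ (V ⧸ W) :=
  Submodule.liftQ W
    { toFun := fun v => Submodule.liftQ W (B v) (fun w hw => LinearMap.mem_ker.mpr (h2 v w hw))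
      map_add' := fun u v => by
        ext x
        simp
      map_smul' := fun c v => by
        ext x
        simp }
    (fun w hw => by
      simp only [LinearMap.mem_ker]
      ext x
      simp [h1 w hw])

end

/-!
Every root is a sign-coherent integer combination of the base `Π`. For a positive root
`β ∉ 2R`, positivity of `(β, β) = ∑ c_p (p, β)` gives a `p ∈ Π` with `c_p > 0` and `(p, β) > 0`,
so `s_p β = β - m p` with `m ≥ 1`. If `β` is not a multiple of `p`, then `s_p β` keeps a positive
coefficient, hence is a positive root of smaller height; otherwise `β = k p` with `k ∣ 2` by
integrality, and `k = 1`. Negative roots are handled by `s_α α = -α`, and elements of `Π` are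
not in `2R` by linear independence. For the Weyl groups, `s_{w α} = w s_α w⁻¹`, and
`s_{2γ} = s_γ` with `γ ∉ 2R` because `4δ` is never a root.
-/

open Set

section Reflection

variable {V : Type*} [AddCommGroup V] [Module ℝ V] (B : LinearMap.BilinForm ℝ V)

lemma srefl_apply (v x : V) : srefl B v x = x - (2 * (B v v)⁻¹ * B v x) • v := by
  simp only [srefl, LinearMap.sub_apply, LinearMap.id_apply, LinearMap.smulRight_apply,
    LinearMap.smul_apply, smul_eq_mul]

lemma srefl_self {v : V} (hv : B v v ≠ 0) : srefl B v v = -v := by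
  rw [srefl_apply, mul_assoc, inv_mul_cancel₀ hv, mul_one, two_smul]
  abel

lemma srefl_srefl (v x : V) : srefl B v (srefl B v x) = x := by
  by_cases hv : B v v = 0
  · simp [srefl_apply, hv]
  · rw [srefl_apply B v x, map_sub, map_smul, srefl_self B hv, srefl_apply, smul_neg]
    abel

lemma srefl_mul_srefl (v : V) : srefl B v * srefl B v = 1 :=
  LinearMap.ext (srefl_srefl B v)

lemma srefl_smul {c : ℝ} (hc : c ≠ 0) (v : V) : srefl B (c • v) = srefl B v := by
  ext x
  by_cases hv : B v v = 0
  · simp [srefl_apply, hv]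
  · simp only [srefl_apply, map_smul, LinearMap.smul_apply, smul_eq_mul, smul_smul]
    congr 1
    field_simp

variable {B}

lemma srefl_isometry (hB : ∀ u w, B u w = B w u) (v x y : V) :
    B (srefl B v x) (srefl B v y) = B x y := by
  by_cases hv : B v v = 0
  · simp [srefl_apply, hv]
  · simp only [srefl_apply, map_sub, map_smul, LinearMap.sub_apply, LinearMap.smul_apply,
      smul_eq_mul, hB x v]
    field_simp
    ring

lemma srefl_conj {w w' : Module.End ℝ V} (hww' : w * w' = 1)
    (hw : ∀ x y, B (w x) (w y) = B x y) (α : V) :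
    srefl B (w α) = w * srefl B α * w' := by
  have hw' : ∀ x, w (w' x) = x := LinearMap.ext_iff.mp hww'
  ext x
  calc srefl B (w α) x = srefl B (w α) (w (w' x)) := by rw [hw']
    _ = w (srefl B α (w' x)) := by simp only [srefl_apply, map_sub, map_smul, hw]

end Reflection

section Weyl

variable {V : Type*} [AddCommGroup V] [Module ℝ V] {B : LinearMap.BilinForm ℝ V} {S : Set V}

lemma srefl_mem_weyl {v : V} (hv : v ∈ S) : srefl B v ∈ weyl B S :=
  Submonoid.subset_closure (mem_image_of_mem _ hv)

lemma weyl_mono {T : Set V} (h : S ⊆ T) : weyl B S ≤ weyl B T :=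
  Submonoid.closure_mono (image_mono h)

lemma mapsTo_of_mem_weyl {R : Set V} (hS : ∀ α ∈ S, MapsTo (srefl B α) R R)
    {w : Module.End ℝ V} (hw : w ∈ weyl B S) : MapsTo w R R := by
  induction hw using Submonoid.closure_induction with
  | mem u hu =>
    obtain ⟨v, hv, rfl⟩ := hu
    exact hS v hv
  | one => exact mapsTo_id R
  | mul a b _ _ ha hb => exact ha.comp hb

lemma isometry_of_mem_weyl (hB : ∀ u w, B u w = B w u)
    {w : Module.End ℝ V} (hw : w ∈ weyl B S) (x y : V) : B (w x) (w y) = B x y := by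
  induction hw using Submonoid.closure_induction generalizing x y with
  | mem u hu =>
    obtain ⟨v, -, rfl⟩ := hu
    exact srefl_isometry hB v x y
  | one => rfl
  | mul a b _ _ ha hb => simp only [Module.End.mul_apply, ha, hb]

lemma exists_inv_of_mem_weyl {w : Module.End ℝ V} (hw : w ∈ weyl B S) :
    ∃ w' ∈ weyl B S, w' * w = 1 ∧ w * w' = 1 := by
  induction hw using Submonoid.closure_induction with
  | mem u hu =>
    obtain ⟨v, hv, rfl⟩ := hu
    exact ⟨srefl B v, srefl_mem_weyl hv, srefl_mul_srefl B v, srefl_mul_srefl B v⟩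
  | one => exact ⟨1, one_mem _, one_mul 1, one_mul 1⟩
  | mul a b _ _ iha ihb =>
    obtain ⟨a', ha', ha'a, haa'⟩ := iha
    obtain ⟨b', hb', hb'b, hbb'⟩ := ihb
    refine ⟨b' * a', mul_mem hb' ha', ?_, ?_⟩
    · rw [mul_assoc, ← mul_assoc a', ha'a, one_mul, hb'b]
    · rw [mul_assoc, ← mul_assoc b, hbb', one_mul, haa']

lemma srefl_apply_mem_weyl (hB : ∀ u w, B u w = B w u) {w : Module.End ℝ V}
    (hw : w ∈ weyl B S) {α : V} (hα : α ∈ S) : srefl B (w α) ∈ weyl B S := by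
  obtain ⟨w', hw', -, hww'⟩ := exists_inv_of_mem_weyl hw
  rw [srefl_conj hww' (isometry_of_mem_weyl hB hw) α]
  exact mul_mem (mul_mem hw (srefl_mem_weyl hα)) hw'

end Weyl

namespace IsEARS

variable {V : Type*} [AddCommGroup V] [Module ℝ V] {B : LinearMap.BilinForm ℝ V} {R : Set V}
  {l n : ℕ} (hE : IsEARS B R l n)
include hE

lemma form_pos {β : V} (hβ : β ∈ R) : 0 < B β β :=
  (hE.posSemidef β).lt_of_ne' (hE.root_nonisotropic β hβ)

lemma mapsTo_srefl {α : V} (hα : α ∈ R) : MapsTo (srefl B α) R R :=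
  fun _ hx => hE.reflect α hα ▸ mem_image_of_mem _ hx

lemma exists_srefl_eq_sub_zsmul {α β : V} (hα : α ∈ R) (hβ : β ∈ R) :
    ∃ m : ℤ, 2 * B α β = m * B α α ∧ srefl B α β = β - m • α := by
  obtain ⟨m, hm⟩ := hE.integral α hα β hβ
  refine ⟨m, hm, ?_⟩
  rw [srefl_apply, ← Int.cast_smul_eq_zsmul ℝ]
  congr 2
  field_simp [hE.root_nonisotropic α hα]
  linarith

lemma dvd_two_of_zsmul_mem {p : V} (hp : p ∈ R) {k : ℤ} (hk : k • p ∈ R) : k ∣ 2 := by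
  obtain ⟨m, hm⟩ := hE.integral _ hk p hp
  have hkp := hE.root_nonisotropic _ hk
  simp only [map_zsmul, LinearMap.smul_apply, zsmul_eq_mul] at hm hkp
  have hpp := hE.root_nonisotropic p hp
  refine ⟨m, ?_⟩
  have : (2 : ℝ) = k * m := by
    apply mul_right_cancel₀ (mul_ne_zero (left_ne_zero_of_mul hkp) hpp)
    linear_combination hm
  exact_mod_cast this

lemma mapsTo_diff_of_mem_weyl {w : Module.End ℝ V} (hw : w ∈ weyl B R) :
    MapsTo w (R \ (fun v : V => (2 : ℤ) • v) '' R) (R \ (fun v : V => (2 : ℤ) • v) '' R) := by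
  obtain ⟨w', hw', hw'w, -⟩ := exists_inv_of_mem_weyl hw
  have hR := fun α hα => hE.mapsTo_srefl (α := α) hα
  rintro x ⟨hx, hx2⟩
  refine ⟨mapsTo_of_mem_weyl hR hw hx, ?_⟩
  rintro ⟨δ, hδ, hδx : (2 : ℤ) • δ = w x⟩
  refine hx2 ⟨w' δ, mapsTo_of_mem_weyl hR hw' hδ, ?_⟩
  show (2 : ℤ) • w' δ = x
  rw [← map_zsmul, hδx, ← Module.End.mul_apply, hw'w, Module.End.one_apply]

lemma eq_one_of_zsmul_mem_diff {p : V} (hp : p ∈ R) {k : ℤ}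
    (hk : k • p ∈ R \ (fun v : V => (2 : ℤ) • v) '' R) (hk0 : 0 < k) : k = 1 := by
  have hk2 := Int.le_of_dvd two_pos (hE.dvd_two_of_zsmul_mem hp hk.1)
  obtain rfl | rfl : k = 1 ∨ k = 2 := by omega
  · rfl
  · exact absurd ⟨p, hp, rfl⟩ hk.2

lemma exists_diff_srefl_eq {β : V} (hβ : β ∈ R) :
    ∃ γ ∈ R \ (fun v : V => (2 : ℤ) • v) '' R, srefl B β = srefl B γ := by
  by_cases hβ2 : β ∈ (fun v : V => (2 : ℤ) • v) '' R
  · obtain ⟨γ, hγ, rfl : (2 : ℤ) • γ = β⟩ := hβ2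
    refine ⟨γ, ⟨hγ, ?_⟩, by
      rw [← Int.cast_smul_eq_zsmul ℝ, srefl_smul B (by norm_num)]⟩
    rintro ⟨δ, hδ, rfl : (2 : ℤ) • δ = γ⟩
    have h4 := hE.dvd_two_of_zsmul_mem hδ (k := 4) (by rwa [smul_smul] at hβ)
    omega
  · exact ⟨β, ⟨hβ, hβ2⟩, rfl⟩

lemma srefl_mem_weyl_of_diff_eq_orbit {P : Set V}
    (hP : R \ (fun v : V => (2 : ℤ) • v) '' R = {v | ∃ w ∈ weyl B P, ∃ α ∈ P, w α = v})
    {β : V} (hβ : β ∈ R) : srefl B β ∈ weyl B P := by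
  obtain ⟨γ, hγ, hβγ⟩ := hE.exists_diff_srefl_eq hβ
  obtain ⟨w, hw, α, hα, rfl⟩ : γ ∈ {v | ∃ w ∈ weyl B P, ∃ α ∈ P, w α = v} := hP ▸ hγ
  exact hβγ ▸ srefl_apply_mem_weyl hE.symm hw hα

end IsEARS

section Base

variable {V : Type*} [AddCommGroup V] {P : Set V} [Fintype P]

variable (P) in
def baseComb : (P → ℤ) →ₗ[ℤ] V := Fintype.linearCombination ℤ (↑)

lemma baseComb_apply (c : P → ℤ) : baseComb P c = ∑ p, c p • (p : V) :=
  Fintype.linearCombination_apply ..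

lemma baseComb_single [DecidableEq P] (p : P) (k : ℤ) :
    baseComb P (Pi.single p k) = k • (p : V) :=
  Fintype.linearCombination_apply_single ..

lemma exists_baseComb_natCast_eq {x : V} (hx : x ∈ nnspan P) :
    ∃ n : P → ℕ, baseComb P (fun p => (n p : ℤ)) = x := by
  rw [nnspan, ← Submodule.span_nat_eq_addSubmonoidClosure, ← Subtype.range_coe (s := P)] at hx
  obtain ⟨n, rfl⟩ := (Submodule.mem_span_range_iff_exists_fun ℕ).mp hx
  exact ⟨n, by simp only [baseComb_apply, natCast_zsmul]⟩

namespace IsEARS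

variable {R : Set V} [Module ℝ V] {B : LinearMap.BilinForm ℝ V} {l n : ℕ} (hE : IsEARS B R l n)
include hE

lemma exists_pos_coeff {c : P → ℤ} (hc : 0 ≤ c) (hβ : baseComb P c ∈ R) :
    ∃ p : P, 0 < c p ∧ 0 < B p (baseComb P c) := by
  set β := baseComb P c
  have hsum : B β β = ∑ p, (c p : ℝ) * B p β := by
    calc B β β = B (∑ p, c p • (p : V)) β := by rw [← baseComb_apply]
      _ = ∑ p, (c p : ℝ) * B p β := by simp [map_sum, LinearMap.sum_apply, zsmul_eq_mul]
  obtain ⟨p, -, hp⟩ := Finset.exists_lt_of_sum_lt (s := Finset.univ) (f := 0)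
    (g := fun p => (c p : ℝ) * B p β) (by simpa [← hsum] using hE.form_pos hβ)
  rcases pos_and_pos_or_neg_and_neg_of_mul_pos hp with ⟨hcp, hpβ⟩ | ⟨hcp, -⟩
  · exact ⟨p, by exact_mod_cast hcp, hpβ⟩
  · exact absurd (hc p) (by exact_mod_cast hcp.not_ge)

end IsEARS

namespace IsBaseSet

variable [Module ℝ V] {R : Set V} {m : ℕ} (hP : IsBaseSet R P m)
include hP

lemma baseComb_injective : Function.Injective (baseComb P) :=
  linearIndependent_iff_injective_fintypeLinearCombination.mp (hP.2.2.2.1.restrict_scalars' ℤ)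

lemma exists_baseComb_eq {β : V} (hβ : β ∈ R) :
    ∃ c : P → ℤ, (0 ≤ c ∨ c ≤ 0) ∧ baseComb P c = β := by
  rcases hP.2.2.2.2.subset hβ with ⟨-, h⟩ | ⟨-, h⟩
  · obtain ⟨n, hn⟩ := exists_baseComb_natCast_eq h
    exact ⟨_, Or.inl fun p => Int.natCast_nonneg (n p), hn⟩
  · obtain ⟨n, hn⟩ := exists_baseComb_natCast_eq (mem_neg.mp h)
    refine ⟨-fun p => (n p : ℤ), Or.inr fun p => ?_, by rw [map_neg, hn, neg_neg]⟩
    simp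

lemma notMem_two_smul_image {α : V} (hα : α ∈ P) : α ∉ (fun v : V => (2 : ℤ) • v) '' R := by
  classical
  rintro ⟨δ, hδ, hδα : (2 : ℤ) • δ = α⟩
  obtain ⟨c, -, rfl⟩ := hP.exists_baseComb_eq hδ
  have h := congr_fun (hP.baseComb_injective (a₁ := (2 : ℤ) • c) (a₂ := Pi.single ⟨α, hα⟩ 1)
    (by rw [map_zsmul, hδα, baseComb_single, one_smul])) ⟨α, hα⟩
  simp only [Pi.smul_apply, smul_eq_mul, Pi.single_eq_same] at h
  omega

variable {B : LinearMap.BilinForm ℝ V} {l n : ℕ} (hE : IsEARS B R l n)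
include hE

lemma exists_baseComb_srefl_eq {c : P → ℤ} (hβ : baseComb P c ∈ R) {p : P}
    (hpβ : 0 < B p (baseComb P c)) {q : P} (hqp : q ≠ p) (hcq : 0 < c q) :
    ∃ d : P → ℤ, 0 ≤ d ∧ ∑ i, d i < ∑ i, c i ∧ baseComb P d = srefl B p (baseComb P c) := by
  classical
  obtain ⟨k, hk, hs⟩ := hE.exists_srefl_eq_sub_zsmul (hP.1 p.2) hβ
  have hk0 : 0 < k := by
    have := hE.form_pos (hP.1 p.2)
    have : (0 : ℝ) < k := by nlinarith
    exact_mod_cast this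
  set d := c - Pi.single p k with hd
  have hdβ : baseComb P d = srefl B p (baseComb P c) := by rw [hd, map_sub, baseComb_single, hs]
  obtain ⟨e, he, hed⟩ := hP.exists_baseComb_eq (hdβ ▸ hE.mapsTo_srefl (hP.1 p.2) hβ)
  obtain rfl := hP.baseComb_injective hed
  have hdq : d q = c q := by simp [hd, hqp]
  have hd0 : 0 ≤ d := he.resolve_right fun h => by
    have := h q
    simp only [Pi.zero_apply] at this
    omega
  refine ⟨d, hd0, ?_, hdβ⟩
  simp only [hd, Pi.sub_apply, Finset.sum_sub_distrib, Finset.sum_pi_single', Finset.mem_univ,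
    if_true]
  omega

lemma exists_weyl_apply_eq_of_nonneg (c : P → ℤ) (hc : 0 ≤ c)
    (hβ : baseComb P c ∈ R \ (fun v : V => (2 : ℤ) • v) '' R) :
    ∃ w ∈ weyl B P, ∃ α ∈ P, w α = baseComb P c := by
  classical
  induction hN : (∑ p, c p).toNat using Nat.strong_induction_on generalizing c with
  | _ N ih =>
  obtain ⟨p, hcp, hpβ⟩ := hE.exists_pos_coeff hc hβ.1
  by_cases hq : ∃ q ≠ p, 0 < c q
  · obtain ⟨q, hqp, hcq⟩ := hq
    obtain ⟨d, hd, hlt, hdβ⟩ := hP.exists_baseComb_srefl_eq hE hβ.1 hpβ hqp hcq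
    have hdR := hE.mapsTo_diff_of_mem_weyl (srefl_mem_weyl (hP.1 p.2)) hβ
    rw [← hdβ] at hdR
    have hd_sum : 0 ≤ ∑ i, d i := Finset.sum_nonneg fun i _ => hd i
    obtain ⟨w, hw, α, hα, hwα⟩ := ih _ (by omega) d hd hdR rfl
    refine ⟨srefl B p * w, mul_mem (srefl_mem_weyl p.2) hw, α, hα, ?_⟩
    rw [Module.End.mul_apply, hwα, hdβ, srefl_srefl]
  · push Not at hq
    have hc_single : c = Pi.single p (c p) := by
      ext q
      rcases eq_or_ne q p with rfl | hqp
      · simp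
      · simpa [hqp] using le_antisymm (hq q hqp) (hc q)
    rw [hc_single, baseComb_single] at hβ ⊢
    rw [hE.eq_one_of_zsmul_mem_diff (hP.1 p.2) hβ hcp, one_smul]
    exact ⟨1, one_mem _, p, p.2, rfl⟩

theorem diff_two_smul_image_eq_orbit :
    R \ (fun v : V => (2 : ℤ) • v) '' R = {v | ∃ w ∈ weyl B P, ∃ α ∈ P, w α = v} := by
  refine Subset.antisymm ?_ ?_
  · intro β hβ
    obtain ⟨c, hc | hc, rfl⟩ := hP.exists_baseComb_eq hβ.1
    · exact hP.exists_weyl_apply_eq_of_nonneg hE c hc hβ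
    · have hsβ := srefl_self B (hE.root_nonisotropic _ hβ.1)
      have hneg := hE.mapsTo_diff_of_mem_weyl (srefl_mem_weyl hβ.1) hβ
      rw [hsβ, ← map_neg] at hneg
      obtain ⟨w, hw, α, hα, hwα⟩ :=
        hP.exists_weyl_apply_eq_of_nonneg hE (-c) (neg_nonneg.mpr hc) hneg
      refine ⟨w * srefl B α, mul_mem hw (srefl_mem_weyl hα), α, hα, ?_⟩
      rw [Module.End.mul_apply, srefl_self B (hE.root_nonisotropic α (hP.1 hα)), map_neg, hwα,
        map_neg, neg_neg]
  · rintro _ ⟨w, hw, α, hα, rfl⟩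
    exact hE.mapsTo_diff_of_mem_weyl (weyl_mono hP.1 hw) ⟨hP.1 hα, hP.notMem_two_smul_image hα⟩

end IsBaseSet

end Base

/-- For a base `Π` of an affine root system `R`:
`R ∖ 2R = W_Π · Π` and `W_R = W_Π`. -/
theorem stmt5 {V : Type*} [AddCommGroup V] [Module ℝ V]
    (B : LinearMap.BilinForm ℝ V) (R : Set V) (l : ℕ)
    (hE : IsEARS B R l 1)
    (P : Set V) (hbase : IsBaseSet R P (l + 1)) :
    R \ ((fun v : V => (2 : ℤ) • v) '' R)
        = {v | ∃ w ∈ weyl B P, ∃ α ∈ P, w α = v} ∧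
    weyl B R = weyl B P := by
  have := hbase.2.1.fintype
  have horbit := hbase.diff_two_smul_image_eq_orbit hE
  refine ⟨horbit, le_antisymm ?_ (weyl_mono hbase.1)⟩
  rw [weyl, Submonoid.closure_le]
  rintro _ ⟨β, hβ, rfl⟩
  exact hE.srefl_mem_weyl_of_diff_eq_orbit horbit hβ
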